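/- The set E₀ = {f ∈ l∞(ℕ) : AE(f) = 0} is a unital *-subalgebra of l∞(ℕ) (it contains the constant functions and is closed under addition, multiplication, and complex conjugation), it is closed in the supremum norm, and it is invariant under the shift σ defined by (σf)(n) = f(n+1). -/

import Mathlib

open Filter Set Topology

namespace Anqie

variable {X : Type*} [TopologicalSpace X]

/-- `𝒰` is an open cover of `X`. -/
def IsOpenCover (𝒰 : Set (Set X)) : Prop :=
  (∀ U ∈ 𝒰, IsOpen U) ∧ ⋃₀ 𝒰 = Set.univ

/-- The common refinement `𝒰 ∨ T⁻¹ 𝒰 ∨ ⋯ ∨ T^{-(n-1)} 𝒰`. -/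
def iterJoin (T : X → X) (𝒰 : Set (Set X)) (n : ℕ) : Set (Set X) :=
  {V | ∃ u : Fin n → Set X, (∀ j, u j ∈ 𝒰) ∧ V = ⋂ j : Fin n, T^[(j : ℕ)] ⁻¹' u j}

/-- The minimal cardinality of a finite subcover of `𝒱` (junk value `0` if none exists). -/
noncomputable def coverNum (𝒱 : Set (Set X)) : ℕ :=
  sInf {k | ∃ F : Finset (Set X), (↑F : Set (Set X)) ⊆ 𝒱 ∧
    ⋃₀ (↑F : Set (Set X)) = Set.univ ∧ F.card = k}

/-- The Adler–Konheim–McAndrew entropy of `T` relative to the open cover `𝒰`. -/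
noncomputable def coverEntropy (T : X → X) (𝒰 : Set (Set X)) : EReal :=
  Filter.atTop.limsup fun n : ℕ =>
    ((Real.log (coverNum (iterJoin T 𝒰 n)) / n : ℝ) : EReal)

/-- The Adler–Konheim–McAndrew topological entropy of `T`, via open covers. -/
noncomputable def entropy (T : X → X) : EReal :=
  ⨆ 𝒰 ∈ {𝒰 : Set (Set X) | IsOpenCover 𝒰}, coverEntropy T 𝒰

/-- The set of forward-orbit sequences of `f : ℕ → X` inside `X^ℕ`. -/
def orbitSet (f : ℕ → X) : Set (ℕ → X) :=
  {ω | ∃ n : ℕ, ∀ k : ℕ, ω k = f (n + k)}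

/-- `X_f`, the closure of the set of orbit sequences in the product topology. -/
def orbitClosure (f : ℕ → X) : Set (ℕ → X) := closure (orbitSet f)

lemma shift_mem_orbitClosure (f : ℕ → X) {ω : ℕ → X} (hω : ω ∈ orbitClosure f) :
    (fun k => ω (k + 1)) ∈ orbitClosure f := by
  have hcont : Continuous fun ω : ℕ → X => fun k => ω (k + 1) :=
    continuous_pi fun k => continuous_apply (k + 1)
  have hmaps : MapsTo (fun ω : ℕ → X => fun k => ω (k + 1)) (orbitSet f) (orbitSet f) := by
    rintro ω ⟨n, hn⟩
    refine ⟨n + 1, fun k => ?_⟩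
    show ω (k + 1) = f (n + 1 + k)
    rw [hn (k + 1)]; congr 1; omega
  exact map_mem_closure hcont hω hmaps

/-- `B_f`, the left shift restricted to `X_f`. -/
def shiftOn (f : ℕ → X) : orbitClosure f → orbitClosure f :=
  fun ω => ⟨fun k => (ω : ℕ → X) (k + 1), shift_mem_orbitClosure f ω.2⟩

/-- The anqie entropy of a map `f : ℕ → X`: the AKM topological entropy of the
left shift on `X_f`. -/
noncomputable def AE (f : ℕ → X) : EReal := entropy (shiftOn f)

end Anqie

namespace Anqie

/-- The shift `σ` on `l∞(ℕ)`: `(σ f)(n) = f (n+1)`. -/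
noncomputable def shiftBCF (f : BoundedContinuousFunction ℕ ℂ) : BoundedContinuousFunction ℕ ℂ :=
  f.compContinuous ⟨fun n => n + 1, continuous_of_discreteTopology⟩

end Anqie

/-!
Sort the length-`n` windows `(f i, …, f (i + n - 1))` of `f` into classes of diameter `< ε`.
For bounded `f` the space `X_f` is compact, and such sortings match open covers of `X_f`
refined along the shift. The cover by `ε/2`-balls in the zeroth coordinate, refined `n` times,
sorts the windows of length `n`. Conversely, by the Lebesgue number lemma every open cover is
refined by the cylinders of some length `m` and radius `ε`, so its `n`-fold refinement has at
most as many members as a sorting at scale `ε/2` of the windows of length `n + m` has classes.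
Hence `AE f = 0` exactly when, at every scale, the number of classes grows subexponentially
in `n`. This condition survives sums, products, conjugation, shifts and uniform limits, since
in each case the windows of the new function are controlled by those of the old ones.
-/

open scoped Uniformity BoundedContinuousFunction

namespace Anqie

section Windows

variable {α β γ : Type*} [PseudoMetricSpace α] [PseudoMetricSpace β] [PseudoMetricSpace γ]

def WindowPartition (f : ℕ → α) (ε : ℝ) (n N : ℕ) : Prop :=
  ∃ φ : ℕ → Fin N, ∀ i i', φ i = φ i' → ∀ j < n, dist (f (i + j)) (f (i' + j)) < ε

def HasSubexpWindowGrowth (f : ℕ → α) : Prop :=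
  ∀ ε > (0 : ℝ), ∀ δ > (0 : ℝ), ∀ᶠ n in atTop,
    ∃ N : ℕ, WindowPartition f ε n N ∧ (N : ℝ) ≤ Real.exp (δ * n)

namespace WindowPartition

variable {f : ℕ → α} {F : ℕ → β} {ε ε' : ℝ} {n N : ℕ}

lemma of_fintype {κ : Type*} [Fintype κ] (φ : ℕ → κ)
    (hφ : ∀ i i', φ i = φ i' → ∀ j < n, dist (f (i + j)) (f (i' + j)) < ε) :
    WindowPartition f ε n (Fintype.card κ) :=
  ⟨Fintype.equivFin κ ∘ φ, fun i i' h => hφ i i' ((Fintype.equivFin κ).injective h)⟩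

lemma of_dist_lt (hf : WindowPartition f ε n N)
    (H : ∀ k k', dist (f k) (f k') < ε → dist (F k) (F k') < ε') :
    WindowPartition F ε' n N :=
  let ⟨φ, hφ⟩ := hf
  ⟨φ, fun i i' h j hj => H _ _ (hφ i i' h j hj)⟩

lemma of_dist_lt₂ {g : ℕ → γ} {M : ℕ} (hf : WindowPartition f ε n N)
    (hg : WindowPartition g ε n M)
    (H : ∀ k k', dist (f k) (f k') < ε → dist (g k) (g k') < ε → dist (F k) (F k') < ε') :
    WindowPartition F ε' n (N * M) := by
  obtain ⟨φ, hφ⟩ := hf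
  obtain ⟨ψ, hψ⟩ := hg
  simpa using of_fintype (fun i => (φ i, ψ i)) fun i i' h j hj =>
    H _ _ (hφ i i' (congrArg Prod.fst h) j hj) (hψ i i' (congrArg Prod.snd h) j hj)

lemma shift (hf : WindowPartition f ε n N) : WindowPartition (fun k => f (k + 1)) ε n N := by
  obtain ⟨φ, hφ⟩ := hf
  refine ⟨fun i => φ (i + 1), fun i i' h j hj => ?_⟩
  simpa only [add_right_comm] using hφ _ _ h j hj

end WindowPartition

namespace HasSubexpWindowGrowth

variable {f : ℕ → α} {F : ℕ → β}

lemma const (c : α) : HasSubexpWindowGrowth fun _ : ℕ => c := fun ε hε δ hδ =>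
  Eventually.of_forall fun n => ⟨1, ⟨fun _ => 0, fun _ _ _ _ _ => by simpa using hε⟩,
    by exact_mod_cast Real.one_le_exp (by positivity)⟩

lemma of_dist_lt (hf : HasSubexpWindowGrowth f)
    (H : ∀ ε > (0 : ℝ), ∃ ε' > (0 : ℝ), ∀ k k', dist (f k) (f k') < ε' → dist (F k) (F k') < ε) :
    HasSubexpWindowGrowth F := by
  intro ε hε δ hδ
  obtain ⟨ε', hε', hH⟩ := H ε hε
  filter_upwards [hf ε' hε' δ hδ] with n ⟨N, hN, hNδ⟩
  exact ⟨N, hN.of_dist_lt hH, hNδ⟩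

lemma of_dist_lt₂ {g : ℕ → γ} (hf : HasSubexpWindowGrowth f) (hg : HasSubexpWindowGrowth g)
    (H : ∀ ε > (0 : ℝ), ∃ ε' > (0 : ℝ), ∀ k k',
      dist (f k) (f k') < ε' → dist (g k) (g k') < ε' → dist (F k) (F k') < ε) :
    HasSubexpWindowGrowth F := by
  intro ε hε δ hδ
  obtain ⟨ε', hε', hH⟩ := H ε hε
  filter_upwards [hf ε' hε' (δ / 2) (half_pos hδ), hg ε' hε' (δ / 2) (half_pos hδ)]
    with n ⟨N, hN, hNδ⟩ ⟨M, hM, hMδ⟩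
  refine ⟨N * M, hN.of_dist_lt₂ hM hH, ?_⟩
  calc ((N * M : ℕ) : ℝ) = N * M := Nat.cast_mul N M
    _ ≤ Real.exp (δ / 2 * n) * Real.exp (δ / 2 * n) := by gcongr
    _ = Real.exp (δ * n) := by rw [← Real.exp_add]; ring_nf

lemma shift (hf : HasSubexpWindowGrowth f) : HasSubexpWindowGrowth fun k => f (k + 1) :=
  fun ε hε δ hδ => (hf ε hε δ hδ).mono fun _ ⟨N, hN, hNδ⟩ => ⟨N, hN.shift, hNδ⟩

end HasSubexpWindowGrowth

lemma isClosed_setOf_hasSubexpWindowGrowth :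
    IsClosed {f : ℕ →ᵇ α | HasSubexpWindowGrowth ⇑f} := by
  refine isClosed_of_closure_subset fun g hg ε hε δ hδ => ?_
  obtain ⟨f, hf, hgf⟩ := Metric.mem_closure_iff.1 hg (ε / 4) (by positivity)
  have hclose : ∀ k, dist (g k) (f k) < ε / 4 := fun k =>
    (BoundedContinuousFunction.dist_coe_le_dist k).trans_lt hgf
  filter_upwards [hf (ε / 2) (half_pos hε) δ hδ] with n ⟨N, hN, hNδ⟩
  refine ⟨N, hN.of_dist_lt fun k k' h => ?_, hNδ⟩
  calc dist (g k) (g k') ≤ dist (g k) (f k) + dist (f k) (f k') + dist (f k') (g k') :=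
        dist_triangle4 _ _ _ _
    _ < ε / 4 + ε / 2 + ε / 4 := by
        gcongr
        · exact hclose k
        · rw [dist_comm]; exact hclose k'
    _ = ε := by ring

end Windows

namespace HasSubexpWindowGrowth

variable {R : Type*}

lemma add [SeminormedAddCommGroup R] {f g : ℕ → R} (hf : HasSubexpWindowGrowth f)
    (hg : HasSubexpWindowGrowth g) : HasSubexpWindowGrowth (f + g) :=
  hf.of_dist_lt₂ hg fun ε hε => ⟨ε / 2, half_pos hε, fun k k' h₁ h₂ =>
    (dist_add_add_le (f k) (g k) (f k') (g k')).trans_lt (by linarith)⟩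

lemma mul [NonUnitalSeminormedRing R] {f g : ℕ → R} (hf_bdd : Bornology.IsBounded (range f))
    (hg_bdd : Bornology.IsBounded (range g)) (hf : HasSubexpWindowGrowth f)
    (hg : HasSubexpWindowGrowth g) : HasSubexpWindowGrowth (f * g) := by
  obtain ⟨C, hC⟩ := isBounded_iff_forall_norm_le.1 (hf_bdd.union hg_bdd)
  have hf_le : ∀ k, ‖f k‖ ≤ C := fun k => hC _ (Or.inl (mem_range_self k))
  have hg_le : ∀ k, ‖g k‖ ≤ C := fun k => hC _ (Or.inr (mem_range_self k))
  have hC₀ : 0 ≤ C := (norm_nonneg _).trans (hf_le 0)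
  refine hf.of_dist_lt₂ hg fun ε hε => ⟨ε / (2 * C + 1), by positivity, fun k k' h₁ h₂ => ?_⟩
  rw [dist_eq_norm] at h₁ h₂ ⊢
  calc ‖f k * g k - f k' * g k'‖ = ‖f k * (g k - g k') + (f k - f k') * g k'‖ := by
        simp only [mul_sub, sub_mul]; abel_nf
    _ ≤ ‖f k‖ * ‖g k - g k'‖ + ‖f k - f k'‖ * ‖g k'‖ :=
        (norm_add_le _ _).trans (add_le_add (norm_mul_le _ _) (norm_mul_le _ _))
    _ ≤ C * (ε / (2 * C + 1)) + ε / (2 * C + 1) * C := by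
        gcongr
        exacts [hf_le k, hg_le k']
    _ < ε := by
        rw [← sub_pos]
        field_simp
        linarith

lemma star [SeminormedAddCommGroup R] [StarAddMonoid R] [NormedStarGroup R] {f : ℕ → R}
    (hf : HasSubexpWindowGrowth f) : HasSubexpWindowGrowth (star f) :=
  hf.of_dist_lt fun ε hε => ⟨ε, hε, fun k k' h => by simpa using h⟩

end HasSubexpWindowGrowth

section Entropy

variable {X : Type*} {T : X → X} {𝒰 𝒱 : Set (Set X)}

lemma coverNum_le_card {F : Finset (Set X)} (hF𝒱 : ↑F ⊆ 𝒱) (hF : ⋃₀ (↑F : Set (Set X)) = univ) :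
    coverNum 𝒱 ≤ F.card :=
  Nat.sInf_le ⟨F, hF𝒱, hF, rfl⟩

lemma coverEntropy_le_zero_iff : coverEntropy T 𝒰 ≤ 0 ↔
    ∀ δ > (0 : ℝ), ∀ᶠ n in atTop, (coverNum (iterJoin T 𝒰 n) : ℝ) ≤ Real.exp (δ * n) := by
  constructor
  · intro h δ hδ
    filter_upwards [eventually_lt_of_limsup_lt (h.trans_lt (EReal.coe_pos.2 hδ)),
      eventually_gt_atTop 0] with n hn hn₀
    rw [EReal.coe_lt_coe_iff, div_lt_iff₀ (by positivity)] at hn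
    exact (Real.lt_exp_of_log_lt hn).le
  · intro h
    refine EReal.le_of_forall_lt_iff_le.1 fun δ hδ => limsup_le_of_le (h := ?_)
    filter_upwards [h δ (EReal.coe_pos.1 hδ)] with n hn
    refine EReal.coe_le_coe_iff.2 (div_le_of_le_mul₀ n.cast_nonneg (EReal.coe_pos.1 hδ).le ?_)
    rcases (coverNum (iterJoin T 𝒰 n)).eq_zero_or_pos with h₀ | h₀
    · simp only [h₀, Nat.cast_zero, Real.log_zero]
      exact mul_nonneg (EReal.coe_pos.1 hδ).le n.cast_nonneg
    · exact (Real.log_le_iff_le_exp (by exact_mod_cast h₀)).2 hn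

variable [TopologicalSpace X]

lemma IsOpenCover.exists_finset_card_eq_coverNum [CompactSpace X] (h𝒱 : IsOpenCover 𝒱) :
    ∃ F : Finset (Set X), ↑F ⊆ 𝒱 ∧ ⋃₀ (↑F : Set (Set X)) = univ ∧ F.card = coverNum 𝒱 := by
  show coverNum 𝒱 ∈ {k | ∃ F : Finset (Set X), ↑F ⊆ 𝒱 ∧ ⋃₀ (↑F : Set (Set X)) = univ ∧ F.card = k}
  apply Nat.sInf_mem
  obtain ⟨𝒢, h𝒢𝒱, h𝒢, hcov⟩ := isCompact_univ.elim_finite_subcover_image (c := id) h𝒱.1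
    (by simp [← sUnion_eq_biUnion, h𝒱.2])
  exact ⟨_, h𝒢.toFinset, by simpa using h𝒢𝒱,
    univ_subset_iff.1 (by simpa [sUnion_eq_biUnion] using hcov), rfl⟩

lemma IsOpenCover.iterJoin (h𝒰 : IsOpenCover 𝒰) (hT : Continuous T) (n : ℕ) :
    IsOpenCover (iterJoin T 𝒰 n) := by
  refine ⟨?_, eq_univ_of_forall fun x => ?_⟩
  · rintro V ⟨u, hu, rfl⟩
    exact isOpen_iInter_of_finite fun j => (h𝒰.1 _ (hu j)).preimage (hT.iterate j)
  · have : ∀ j : Fin n, ∃ U ∈ 𝒰, T^[j] x ∈ U := fun j => mem_sUnion.1 (h𝒰.2 ▸ mem_univ _)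
    choose u hu hxu using this
    exact ⟨_, ⟨u, hu, rfl⟩, mem_iInter.2 hxu⟩

lemma zero_le_entropy (T : X → X) : 0 ≤ entropy T := by
  have h : IsOpenCover ({univ} : Set (Set X)) := ⟨by simp, by simp⟩
  refine le_trans ?_ (le_iSup₂ (f := fun 𝒰 (_ : 𝒰 ∈ {𝒰 | IsOpenCover 𝒰}) => coverEntropy T 𝒰) _ h)
  exact le_limsup_of_frequently_le (Frequently.of_forall fun n =>
    EReal.coe_nonneg.2 (div_nonneg (Real.log_natCast_nonneg _) n.cast_nonneg))

lemma entropy_le_zero_iff : entropy T ≤ 0 ↔ ∀ 𝒰, IsOpenCover 𝒰 →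
    ∀ δ > (0 : ℝ), ∀ᶠ n in atTop, (coverNum (iterJoin T 𝒰 n) : ℝ) ≤ Real.exp (δ * n) := by
  simp only [entropy, iSup₂_le_iff, mem_ofPred_eq, coverEntropy_le_zero_iff]

end Entropy

section ShiftSpace

variable {α : Type*} [PseudoMetricSpace α]

lemma exists_cylinder_subset_of_mem_uniformity {U : Set ((ℕ → α) × (ℕ → α))}
    (hU : U ∈ 𝓤 (ℕ → α)) :
    ∃ m, ∃ ε > (0 : ℝ), {q : (ℕ → α) × (ℕ → α) | ∀ j < m, dist (q.1 j) (q.2 j) < ε} ⊆ U := by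
  rw [Pi.uniformity, (HasBasis.iInf' fun _ => Metric.uniformity_basis_dist.comap _).mem_iff]
    at hU
  obtain ⟨⟨I, ε⟩, ⟨hI, hε⟩, hIU⟩ := hU
  obtain ⟨m, hm⟩ := hI.bddAbove
  obtain ⟨e, heI, he⟩ := ((eventually_all_finite hI).2 fun i hi =>
    Ioo_mem_nhdsGT (hε i hi)).and self_mem_nhdsWithin |>.exists
  refine ⟨m + 1, e, he, fun q hq => hIU (mem_iInter₂.2 fun i hi => ?_)⟩
  exact (hq i (Nat.lt_succ_of_le (hm hi))).trans (heI i hi).2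

lemma IsOpenCover.exists_cylinder_subset {S : Set (ℕ → α)} [CompactSpace S]
    {𝒲 : Set (Set S)} (h𝒲 : IsOpenCover 𝒲) :
    ∃ m, ∃ ε > (0 : ℝ), ∀ ω : S, ∃ W ∈ 𝒲, ∀ η : S,
      (∀ j < m, dist ((ω : ℕ → α) j) ((η : ℕ → α) j) < ε) → η ∈ W := by
  obtain ⟨V, hV, hVW⟩ := lebesgue_number_lemma_sUnion isCompact_univ h𝒲.1 h𝒲.2.ge
  have hV' : V ∈ comap (fun q : S × S => ((q.1 : ℕ → α), (q.2 : ℕ → α))) (𝓤 (ℕ → α)) := hV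
  obtain ⟨U, hU, hUV⟩ := mem_comap.1 hV'
  obtain ⟨m, ε, hε, hεU⟩ := exists_cylinder_subset_of_mem_uniformity hU
  refine ⟨m, ε, hε, fun ω => ?_⟩
  obtain ⟨W, hW, hball⟩ := hVW ω trivial
  exact ⟨W, hW, fun η hη => hball (hUV (hεU hη))⟩

variable {f : ℕ → α}

def orbitPoint (f : ℕ → α) (i : ℕ) : orbitClosure f :=
  ⟨fun k => f (i + k), subset_closure ⟨i, fun _ => rfl⟩⟩

lemma compactSpace_orbitClosure [ProperSpace α] (hb : Bornology.IsBounded (range f)) :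
    CompactSpace (orbitClosure f) := by
  refine isCompact_iff_compactSpace.1 ((isCompact_univ_pi fun _ => hb.isCompact_closure)
    |>.of_isClosed_subset isClosed_closure (closure_minimal ?_ ?_))
  · rintro ω ⟨i, hi⟩ k -
    exact hi k ▸ subset_closure (mem_range_self _)
  · exact isClosed_set_pi fun _ _ => isClosed_closure

lemma continuous_shiftOn (f : ℕ → α) : Continuous (shiftOn f) :=
  (continuous_pi fun k => (continuous_apply (k + 1)).comp continuous_subtype_val).subtype_mk
    (shift_mem_orbitClosure f ·.2)

lemma shiftOn_iterate_apply (m : ℕ) (ω : orbitClosure f) (k : ℕ) :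
    ((shiftOn f)^[m] ω : ℕ → α) k = (ω : ℕ → α) (k + m) := by
  induction m generalizing ω with
  | zero => rfl
  | succ m ih => rw [Function.iterate_succ_apply, ih]; rfl

lemma exists_forall_dist_lt_of_mem_orbitClosure {ω : ℕ → α} (hω : ω ∈ orbitClosure f) (m : ℕ)
    {ε : ℝ} (hε : 0 < ε) : ∃ i, ∀ j < m, dist (ω j) (f (i + j)) < ε := by
  have hnear : ∀ᶠ ξ in 𝓝 ω, ∀ j ∈ Iio m, dist (ξ j) (ω j) < ε :=
    (eventually_all_finite (finite_Iio m)).2 fun j _ =>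
      (continuous_apply j).continuousAt (Metric.ball_mem_nhds (ω j) hε)
  obtain ⟨ξ, ⟨i, hi⟩, hξ⟩ := ((mem_closure_iff_frequently.1 hω).and_eventually hnear).exists
  exact ⟨i, fun j hj => by simpa [hi, dist_comm] using hξ j hj⟩

lemma coverNum_iterJoin_shiftOn_le {𝒲 : Set (Set (orbitClosure f))} {m n N : ℕ} {ε : ℝ}
    (hε : 0 < ε) (h𝒲 : ∀ ω : orbitClosure f, ∃ W ∈ 𝒲, ∀ η : orbitClosure f,
      (∀ j < m, dist ((ω : ℕ → α) j) ((η : ℕ → α) j) < ε) → η ∈ W)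
    (hN : WindowPartition f (ε / 2) (n + m) N) :
    coverNum (iterJoin (shiftOn f) 𝒲 n) ≤ N := by
  classical
  obtain ⟨φ, hφ⟩ := hN
  choose W hW𝒲 hW using h𝒲
  -- the class `s` is represented by the window starting at `invFun φ s`
  let V : Fin N → Set (orbitClosure f) := fun s =>
    ⋂ j : Fin n, (shiftOn f)^[j] ⁻¹' W (orbitPoint f (Function.invFun φ s + j))
  have hV : ∀ η, ∃ s, η ∈ V s := by
    intro η
    obtain ⟨i, hi⟩ := exists_forall_dist_lt_of_mem_orbitClosure η.2 (n + m) (half_pos hε)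
    have hrep : φ (Function.invFun φ (φ i)) = φ i := Function.invFun_eq ⟨i, rfl⟩
    refine ⟨φ i, mem_iInter.2 fun j => hW _ _ fun k hk => ?_⟩
    have hkj : k + j < n + m := by omega
    have h₁ := hφ _ _ hrep (k + j) hkj
    have h₂ := hi (k + j) hkj
    rw [shiftOn_iterate_apply]
    calc dist (f (Function.invFun φ (φ i) + j + k)) ((η : ℕ → α) (k + j))
        ≤ dist (f (Function.invFun φ (φ i) + (k + j))) (f (i + (k + j)))
          + dist ((η : ℕ → α) (k + j)) (f (i + (k + j))) := by
          rw [add_assoc, add_comm (j : ℕ) k]; exact dist_triangle_right _ _ _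
      _ < ε := by linarith
  refine (coverNum_le_card (F := Finset.univ.image V) ?_ ?_).trans
    (Finset.card_image_le.trans (Finset.card_fin N).le)
  · simpa [Set.subset_def] using fun s => ⟨W ∘ _, fun j => hW𝒲 _, rfl⟩
  · exact eq_univ_of_forall fun η => by simpa using hV η

def coordBallCover (f : ℕ → α) (r : ℝ) : Set (Set (orbitClosure f)) :=
  range fun c : α => {ω | dist ((ω : ℕ → α) 0) c < r}

lemma isOpenCover_coordBallCover (f : ℕ → α) {r : ℝ} (hr : 0 < r) :
    IsOpenCover (coordBallCover f r) := by
  refine ⟨?_, eq_univ_of_forall fun ω => ⟨_, ⟨(ω : ℕ → α) 0, rfl⟩, by simpa using hr⟩⟩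
  rintro U ⟨c, rfl⟩
  exact Metric.isOpen_ball.preimage
    ((continuous_apply (A := fun _ : ℕ => α) 0).comp continuous_subtype_val)

lemma windowPartition_coverNum_iterJoin [CompactSpace (orbitClosure f)] {ε : ℝ} (hε : 0 < ε)
    (n : ℕ) :
    WindowPartition f ε n
      (coverNum (iterJoin (shiftOn f) (coordBallCover f (ε / 2)) n)) := by
  obtain ⟨F, hF𝒰, hF, hcard⟩ :=
    ((isOpenCover_coordBallCover f (half_pos hε)).iterJoin (continuous_shiftOn f) n)
      |>.exists_finset_card_eq_coverNum
  have hmem : ∀ i, ∃ V : F, orbitPoint f i ∈ (V : Set (orbitClosure f)) := fun i => by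
    obtain ⟨V, hV, hiV⟩ := mem_sUnion.1 (hF ▸ mem_univ (orbitPoint f i))
    exact ⟨⟨V, hV⟩, hiV⟩
  choose φ hφ using hmem
  rw [← hcard, ← Fintype.card_coe]
  refine WindowPartition.of_fintype φ fun i i' h j hj => ?_
  obtain ⟨u, hu, hV⟩ := hF𝒰 (φ i).2
  obtain ⟨c, hc⟩ := hu ⟨j, hj⟩
  have hball : ∀ i'', φ i'' = φ i → dist (f (i'' + j)) c < ε / 2 := fun i'' h'' => by
    have := mem_iInter.1 (hV ▸ h'' ▸ hφ i'') ⟨j, hj⟩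
    simpa [← hc, coordBallCover, shiftOn_iterate_apply, orbitPoint, add_comm j] using this
  calc dist (f (i + j)) (f (i' + j)) ≤ dist (f (i + j)) c + dist (f (i' + j)) c :=
        dist_triangle_right _ _ _
    _ < ε := by linarith [hball i rfl, hball i' h.symm]

lemma AE_le_zero_of_hasSubexpWindowGrowth [ProperSpace α] (hb : Bornology.IsBounded (range f))
    (hf : HasSubexpWindowGrowth f) : AE f ≤ 0 := by
  have := compactSpace_orbitClosure hb
  refine entropy_le_zero_iff.2 fun 𝒲 h𝒲 δ hδ => ?_
  obtain ⟨m, ε, hε, hleb⟩ := h𝒲.exists_cylinder_subset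
  filter_upwards [(tendsto_add_atTop_nat m).eventually (hf (ε / 2) (half_pos hε) _ (half_pos hδ)),
    eventually_ge_atTop m] with n ⟨N, hN, hNδ⟩ hmn
  calc (coverNum (iterJoin (shiftOn f) 𝒲 n) : ℝ) ≤ N :=
        by exact_mod_cast coverNum_iterJoin_shiftOn_le hε hleb hN
    _ ≤ Real.exp (δ / 2 * ↑(n + m)) := hNδ
    _ ≤ Real.exp (δ * n) := by
        have : (m : ℝ) ≤ n := by exact_mod_cast hmn
        rw [Real.exp_le_exp, Nat.cast_add]
        nlinarith

lemma hasSubexpWindowGrowth_of_AE_le_zero [ProperSpace α] (hb : Bornology.IsBounded (range f))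
    (hf : AE f ≤ 0) : HasSubexpWindowGrowth f := by
  have := compactSpace_orbitClosure hb
  intro ε hε δ hδ
  filter_upwards [entropy_le_zero_iff.1 hf _ (isOpenCover_coordBallCover f (half_pos hε)) δ hδ]
    with n hn
  exact ⟨_, windowPartition_coverNum_iterJoin hε n, hn⟩

theorem AE_eq_zero_iff_hasSubexpWindowGrowth [ProperSpace α]
    (hb : Bornology.IsBounded (range f)) : AE f = 0 ↔ HasSubexpWindowGrowth f :=
  ⟨fun h => hasSubexpWindowGrowth_of_AE_le_zero hb h.le,
    fun h => (AE_le_zero_of_hasSubexpWindowGrowth hb h).antisymm (zero_le_entropy _)⟩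

end ShiftSpace

end Anqie

/-- `E₀ = {f ∈ l∞(ℕ) : AE(f) = 0}` is a unital *-subalgebra of
`l∞(ℕ)` (it contains the constants and is closed under addition, multiplication
and complex conjugation), it is closed in the supremum norm, and it is invariant
under the shift `σ`, `(σ f)(n) = f (n+1)`. -/
theorem zero_entropy_functions_form_shift_invariant_closed_star_subalgebra :
    (1 : BoundedContinuousFunction ℕ ℂ) ∈ {f : BoundedContinuousFunction ℕ ℂ | Anqie.AE ⇑f = 0} ∧
    (∀ c : ℂ, BoundedContinuousFunction.const ℕ c ∈
      {f : BoundedContinuousFunction ℕ ℂ | Anqie.AE ⇑f = 0}) ∧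
    (∀ f g : BoundedContinuousFunction ℕ ℂ,
      Anqie.AE ⇑f = 0 → Anqie.AE ⇑g = 0 → Anqie.AE ⇑(f + g) = 0) ∧
    (∀ f g : BoundedContinuousFunction ℕ ℂ,
      Anqie.AE ⇑f = 0 → Anqie.AE ⇑g = 0 → Anqie.AE ⇑(f * g) = 0) ∧
    (∀ f : BoundedContinuousFunction ℕ ℂ, Anqie.AE ⇑f = 0 → Anqie.AE ⇑(star f) = 0) ∧
    IsClosed {f : BoundedContinuousFunction ℕ ℂ | Anqie.AE ⇑f = 0} ∧
    (∀ f : BoundedContinuousFunction ℕ ℂ,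
      Anqie.AE ⇑f = 0 → Anqie.AE ⇑(Anqie.shiftBCF f) = 0) := by
  have key (f : BoundedContinuousFunction ℕ ℂ) :
      Anqie.AE ⇑f = 0 ↔ Anqie.HasSubexpWindowGrowth ⇑f :=
    Anqie.AE_eq_zero_iff_hasSubexpWindowGrowth f.isBounded_range
  simp only [Set.mem_ofPred_eq, key]
  exact ⟨.const 1, .const, fun _ _ hf hg => hf.add hg,
    fun f g hf hg => hf.mul f.isBounded_range g.isBounded_range hg,
    fun _ hf => hf.star, Anqie.isClosed_setOf_hasSubexpWindowGrowth, fun _ hf => hf.shift⟩
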